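/- Let ε ∈ ℝ, Δτ > 0, and assume the linear instability condition: ε < 0 or ε > 2/(π(Δτ)²). Let θ, θ' ∈ ℝ with cos θ ≠ 0 and cos θ' ≠ 0, and let a = (a₁, a₂) ∈ ℝ² be nonzero with ‖Ĵ(θ)·a‖ < ‖a‖ (i.e., a lies in the contracting cone of T̂_{ε,Δτ} at θ). Then a₁·a₂ < 0, and the preimage under the Jacobian at any point expands: ‖Ĵ(θ')⁻¹·a‖ > ‖a‖. -/
import Mathlib

/-- The action of the Jacobian `Ĵ(θ)` of the map `T̂_{ε,Δτ}` on a vector of `ℝ²`. -/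
noncomputable def JhatApply (ε Δτ θ : ℝ) (a : ℝ × ℝ) : ℝ × ℝ :=
  ((1 - Real.pi * ε * Δτ ^ 2 / Real.cos θ ^ 2) * a.1
      + (-(2 * Real.pi * ε * Δτ) / Real.cos θ ^ 2) * a.2,
   Δτ * (1 - Real.pi * ε * Δτ ^ 2 / (2 * Real.cos θ ^ 2)) * a.1
      + (1 - Real.pi * ε * Δτ ^ 2 / Real.cos θ ^ 2) * a.2)

/-- The action of the inverse Jacobian `Ĵ(θ)⁻¹` (the matrix with rows
`(1 − πε(Δτ)²/cos²θ, 2πεΔτ/cos²θ)` and `(−Δτ(1 − πε(Δτ)²/(2cos²θ)), 1 − πε(Δτ)²/cos²θ)`)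
on a vector of `ℝ²`. -/
noncomputable def JhatInvApply (ε Δτ θ : ℝ) (a : ℝ × ℝ) : ℝ × ℝ :=
  ((1 - Real.pi * ε * Δτ ^ 2 / Real.cos θ ^ 2) * a.1
      + (2 * Real.pi * ε * Δτ / Real.cos θ ^ 2) * a.2,
   -(Δτ * (1 - Real.pi * ε * Δτ ^ 2 / (2 * Real.cos θ ^ 2))) * a.1
      + (1 - Real.pi * ε * Δτ ^ 2 / Real.cos θ ^ 2) * a.2)

private lemma cross_pos (c Δτ : ℝ) (hΔτ : 0 < Δτ) (hc : c < 0 ∨ 2 < c) :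
    0 < (1 - c) * (Δτ * (1 - c/2) - 2*c/Δτ) := by
  rcases hc with h1 | h1
  · have hv : 2*c/Δτ < 0 := div_neg_of_neg_of_pos (by linarith) hΔτ
    have : 0 < Δτ * (1 - c/2) := mul_pos hΔτ (by linarith)
    have : 0 < Δτ * (1 - c/2) - 2*c/Δτ := by linarith
    exact mul_pos (by linarith) this
  · have hv : 0 < 2*c/Δτ := div_pos (by linarith) hΔτ
    have : Δτ * (1 - c/2) < 0 := mul_neg_of_pos_of_neg hΔτ (by linarith)
    exact mul_pos_of_neg_of_neg (by linarith) (by linarith)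

private lemma u_sq (c : ℝ) (hc : c < 0 ∨ 2 < c) : 1 < (1 - c)^2 := by
  rcases hc with h1 | h1 <;> nlinarith

private lemma cone_neg (c Δτ a₁ a₂ : ℝ) (hΔτ : 0 < Δτ) (hc : c < 0 ∨ 2 < c)
    (ha : 0 < a₁^2 + a₂^2)
    (h : ((1-c)*a₁ - (2*c/Δτ)*a₂)^2 + (Δτ*(1-c/2)*a₁ + (1-c)*a₂)^2 < a₁^2 + a₂^2) :
    a₁ * a₂ < 0 := by
  by_contra h0
  push_neg at h0
  have hC := cross_pos c Δτ hΔτ hc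
  have hu := u_sq c hc
  nlinarith [mul_nonneg hC.le h0, sq_nonneg (Δτ*(1-c/2)*a₁), sq_nonneg ((2*c/Δτ)*a₂),
    mul_pos (show (0:ℝ) < (1-c)^2 - 1 by linarith) ha]

private lemma inv_expand (c Δτ a₁ a₂ : ℝ) (hΔτ : 0 < Δτ) (hc : c < 0 ∨ 2 < c)
    (hneg : a₁ * a₂ < 0) :
    a₁^2 + a₂^2 < ((1-c)*a₁ + (2*c/Δτ)*a₂)^2 + (-(Δτ*(1-c/2))*a₁ + (1-c)*a₂)^2 := by
  have hC := cross_pos c Δτ hΔτ hc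
  have hu := u_sq c hc
  have ha : 0 < a₁^2 + a₂^2 := by nlinarith [sq_nonneg (a₁ + a₂)]
  nlinarith [mul_pos hC (neg_pos.2 hneg), sq_nonneg (Δτ*(1-c/2)*a₁), sq_nonneg ((2*c/Δτ)*a₂),
    mul_pos (show (0:ℝ) < (1-c)^2 - 1 by linarith) ha]

private lemma c_range (ε Δτ θ : ℝ) (hΔτ : 0 < Δτ)
    (hli : ε < 0 ∨ ε > 2 / (Real.pi * Δτ ^ 2)) (hθ : Real.cos θ ≠ 0) :
    Real.pi * ε * Δτ ^ 2 / Real.cos θ ^ 2 < 0 ∨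
      2 < Real.pi * ε * Δτ ^ 2 / Real.cos θ ^ 2 := by
  have hπ := Real.pi_pos
  have hq : 0 < Real.cos θ ^ 2 := by positivity
  rcases hli with h1 | h1
  · left
    apply div_neg_of_neg_of_pos _ hq
    have hpe : Real.pi * ε < 0 := mul_neg_of_pos_of_neg hπ h1
    nlinarith [pow_pos hΔτ 2]
  · right
    have hd : 0 < Real.pi * Δτ ^ 2 := by positivity
    have h2 : 2 < ε * (Real.pi * Δτ ^ 2) := (div_lt_iff₀ hd).1 h1
    rw [lt_div_iff₀ hq]
    nlinarith [Real.cos_sq_le_one θ]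

/-- Under the linear instability condition (with `Δτ > 0`): any nonzero vector
contracted by `Ĵ(θ)` has negative slope (`a₁·a₂ < 0`), and the inverse Jacobian
at any regular point expands it: `‖Ĵ(θ')⁻¹·a‖ > ‖a‖`. -/
theorem Jhat_contracting_cone (ε Δτ : ℝ) (hΔτ : Δτ > 0)
    (hli : ε < 0 ∨ ε > 2 / (Real.pi * Δτ ^ 2))
    (θ θ' : ℝ) (hθ : Real.cos θ ≠ 0) (hθ' : Real.cos θ' ≠ 0)
    (a : ℝ × ℝ) (ha : a ≠ 0)
    (hcontr : Real.sqrt ((JhatApply ε Δτ θ a).1 ^ 2 + (JhatApply ε Δτ θ a).2 ^ 2)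
        < Real.sqrt (a.1 ^ 2 + a.2 ^ 2)) :
    a.1 * a.2 < 0 ∧
    Real.sqrt ((JhatInvApply ε Δτ θ' a).1 ^ 2 + (JhatInvApply ε Δτ θ' a).2 ^ 2)
      > Real.sqrt (a.1 ^ 2 + a.2 ^ 2) := by
  have hq : 0 < Real.cos θ ^ 2 := by positivity
  have hq' : 0 < Real.cos θ' ^ 2 := by positivity
  set c := Real.pi * ε * Δτ ^ 2 / Real.cos θ ^ 2 with hc_def
  set c' := Real.pi * ε * Δτ ^ 2 / Real.cos θ' ^ 2 with hc'_def
  have hc := c_range ε Δτ θ hΔτ hli hθ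
  have hc' := c_range ε Δτ θ' hΔτ hli hθ'
  have ha2 : 0 < a.1^2 + a.2^2 := by
    have : a.1 ≠ 0 ∨ a.2 ≠ 0 := by
      by_contra hcon
      push_neg at hcon
      exact ha (Prod.ext hcon.1 hcon.2)
    rcases this with h | h
    · have : 0 < a.1^2 := by positivity
      nlinarith [sq_nonneg a.2]
    · have : 0 < a.2^2 := by positivity
      nlinarith [sq_nonneg a.1]
  -- rewrite Jhat entries
  have e1 : (JhatApply ε Δτ θ a).1 = (1-c)*a.1 - (2*c/Δτ)*a.2 := by
    simp only [JhatApply, hc_def]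
    field_simp
    ring
  have e2 : (JhatApply ε Δτ θ a).2 = Δτ*(1-c/2)*a.1 + (1-c)*a.2 := by
    simp only [JhatApply, hc_def]
    field_simp
  have f1 : (JhatInvApply ε Δτ θ' a).1 = (1-c')*a.1 + (2*c'/Δτ)*a.2 := by
    simp only [JhatInvApply, hc'_def]
    field_simp
  have f2 : (JhatInvApply ε Δτ θ' a).2 = -(Δτ*(1-c'/2))*a.1 + (1-c')*a.2 := by
    simp only [JhatInvApply, hc'_def]
    field_simp
  have hXY : (JhatApply ε Δτ θ a).1 ^ 2 + (JhatApply ε Δτ θ a).2 ^ 2 < a.1^2 + a.2^2 := by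
    by_contra hle
    push_neg at hle
    exact absurd hcontr (not_lt.2 (Real.sqrt_le_sqrt hle))
  rw [e1, e2] at hXY
  have hneg : a.1 * a.2 < 0 := cone_neg c Δτ a.1 a.2 hΔτ hc ha2 hXY
  refine ⟨hneg, ?_⟩
  have hexp := inv_expand c' Δτ a.1 a.2 hΔτ hc' hneg
  rw [← f1, ← f2] at hexp
  exact Real.sqrt_lt_sqrt (by positivity) hexp
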